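/- Let X = {X_ij : 1 ≤ i,j ≤ n} be an n×n array of independent real random variables with n ≥ 2, means c_ij with all row and column sums zero, variances σ_ij² ≥ 0, normalization (1/n) Σ_{i,j} σ_ij² + (1/(n−1)) Σ_{i,j} c_ij² = 1, W = Σ_i X_{iπ(i)} for π a uniform random permutation of {1,…,n} independent of X, (I,J) a uniform pair of distinct indices independent of X and π, and W' = W − X_{Iπ(I)} − X_{Jπ(J)} + X_{Iπ(J)} + X_{Jπ(I)}. Then (4/(n−1))(1 − 1/√n) ≤ E(W'−W)² ≤ (4/(n−1))(1 + 1/√n). -/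

import Mathlib

open MeasureTheory ProbabilityTheory
open scoped ENNReal

noncomputable instance (n : ℕ) : MeasurableSpace (Equiv.Perm (Fin n)) := ⊤

/-- The combinatorial sum `W = ∑ i, X_{i π(i)}`. -/
noncomputable def permSum {Ω : Type*} (n : ℕ) (X : Fin n → Fin n → Ω → ℝ)
    (π : Ω → Equiv.Perm (Fin n)) (ω : Ω) : ℝ :=
  ∑ i, X i (π ω i) ω

/-- `W' = W - X_{I π(I)} - X_{J π(J)} + X_{I π(J)} + X_{J π(I)}`, where `(I, J) = p`. -/
noncomputable def permSum' {Ω : Type*} (n : ℕ) (X : Fin n → Fin n → Ω → ℝ)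
    (π : Ω → Equiv.Perm (Fin n)) (p : Ω → Fin n × Fin n) (ω : Ω) : ℝ :=
  permSum n X π ω
    - X (p ω).1 (π ω (p ω).1) ω - X (p ω).2 (π ω (p ω).2) ω
    + X (p ω).1 (π ω (p ω).2) ω + X (p ω).2 (π ω (p ω).1) ω

/-!
`W' - W` is the contrast `x_{I,πJ} + x_{J,πI} - x_{I,πI} - x_{J,πJ}` of the random array at four
distinct cells. Since `(I, J)` and `π` are independent of `X`, conditioning on them turns its second
moment into the sum of the four variances plus the square of the same contrast of the means. For a
uniform `π`, the pair `(πI, πJ)` is uniform on distinct pairs, and summing over distinct pairs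
`(i, j)`, `(k, l)`, where the squared mean contrast vanishes on the diagonals and the row and column
sums of `c` vanish, gives `E(W' - W)² = 4 Σσ²/n² + 4 Σc²/(n-1)²`. By the normalization this is a
convex combination of `4/n` and `4/(n-1)`, and `4/(n-1) (1 - 1/√n) ≤ 4/n`.
-/

open Finset

/-- The change of `∑ m, x m (τ m)` when the values `k = τ i`, `l = τ j` of `τ` are exchanged. -/
def swapIncrement {ι R : Type*} [AddCommGroup R] (x : ι → ι → R) (i j k l : ι) : R :=
  x i l + x j k - x i k - x j l

/-- The second moment of `swapIncrement X i j k l` for independent entries with variances `v` and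
means `c`, when `i ≠ j` and `k ≠ l`. -/
def swapIncrementMoment {ι R : Type*} [CommRing R] (v c : ι → ι → R) (i j k l : ι) : R :=
  (v i k + v i l) + (v j k + v j l) + swapIncrement c i j k l ^ 2

section Combinatorics

variable {α : Type*}

theorem Equiv.Perm.exists_apply_eq_apply_eq {i j k l : α} (hij : i ≠ j) (hkl : k ≠ l) :
    ∃ τ : Equiv.Perm α, τ i = k ∧ τ j = l :=
  MulAction.is_two_pretransitive_iff.mp (Equiv.Perm.isMultiplyPretransitive α 2) hij hkl

variable [Fintype α] {R : Type*} [CommRing R]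

theorem sum_sum_sub_sq (x : α → R) :
    ∑ k, ∑ l, (x l - x k) ^ 2 = 2 * Fintype.card α * ∑ k, x k ^ 2 - 2 * (∑ k, x k) ^ 2 := by
  simp only [sub_sq, sum_add_distrib, sum_sub_distrib, sum_const, card_univ, nsmul_eq_mul,
    mul_assoc, ← mul_sum, ← sum_mul]
  ring

theorem sum_sum_swapIncrement_sq {c : α → α → R} (hrow : ∀ i, ∑ j, c i j = 0) (i j : α) :
    ∑ k, ∑ l, swapIncrement c i j k l ^ 2 = 2 * Fintype.card α * ∑ m, (c i m - c j m) ^ 2 := by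
  have hdiff : ∀ k l, swapIncrement c i j k l = (c i l - c j l) - (c i k - c j k) := by
    intro k l
    simp only [swapIncrement]
    ring
  simp only [hdiff, sum_sum_sub_sq, sum_sub_distrib, hrow]
  ring

variable [DecidableEq α]

/-- For a uniform permutation `σ` and `i ≠ j`, the pair `(σ i, σ j)` is uniform on the
off-diagonal. -/
theorem offDiag_card_nsmul_sum_perm {M : Type*} [AddCommMonoid M] (h : α → α → M) {i j : α}
    (hij : i ≠ j) :
    (univ : Finset α).offDiag.card • ∑ σ : Equiv.Perm α, h (σ i) (σ j)
      = (Fintype.card α).factorial • ∑ r ∈ (univ : Finset α).offDiag, h r.1 r.2 := by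
  have hconst : ∀ r ∈ (univ : Finset α).offDiag,
      ∑ σ : Equiv.Perm α, h (σ r.1) (σ r.2) = ∑ σ : Equiv.Perm α, h (σ i) (σ j) := by
    intro r hr
    obtain ⟨τ, hτi, hτj⟩ := Equiv.Perm.exists_apply_eq_apply_eq hij (mem_offDiag.1 hr).2.2
    rw [← hτi, ← hτj]
    exact Fintype.sum_equiv (Equiv.mulRight τ) _ _ fun σ => rfl
  have hinvariant : ∀ σ : Equiv.Perm α,
      ∑ r ∈ (univ : Finset α).offDiag, h (σ r.1) (σ r.2) = ∑ r ∈ univ.offDiag, h r.1 r.2 :=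
    fun σ => Finset.sum_equiv (σ.prodCongr σ) (by simp [σ.injective.eq_iff]) (by simp)
  calc _ = ∑ r ∈ (univ : Finset α).offDiag, ∑ σ : Equiv.Perm α, h (σ r.1) (σ r.2) := by
        rw [sum_congr rfl hconst, sum_const]
    _ = ∑ σ : Equiv.Perm α, ∑ r ∈ (univ : Finset α).offDiag, h (σ r.1) (σ r.2) := sum_comm
    _ = _ := by
        rw [sum_congr rfl fun σ _ => hinvariant σ, sum_const, card_univ, Fintype.card_perm]

theorem sum_offDiag_eq_sum_sum_sub_sum_diag (f : α → α → R) :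
    ∑ r ∈ (univ : Finset α).offDiag, f r.1 r.2 = ∑ i, ∑ j, f i j - ∑ i, f i i := by
  have h := sum_union (disjoint_diag_offDiag (univ : Finset α)) (f := fun r => f r.1 r.2)
  rw [diag_union_offDiag, sum_diag, sum_product] at h
  exact eq_sub_of_add_eq' h.symm

theorem sum_offDiag_eq_sum_sum_of_diag {f : α → α → R} (hf : ∀ i, f i i = 0) :
    ∑ r ∈ (univ : Finset α).offDiag, f r.1 r.2 = ∑ i, ∑ j, f i j := by
  simp [sum_offDiag_eq_sum_sum_sub_sum_diag, hf]

theorem sum_offDiag_add (a : α → R) :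
    ∑ r ∈ (univ : Finset α).offDiag, (a r.1 + a r.2) = 2 * (Fintype.card α - 1) * ∑ i, a i := by
  rw [sum_add_distrib, sum_offDiag_eq_sum_sum_sub_sum_diag (fun i _ => a i),
    sum_offDiag_eq_sum_sum_sub_sum_diag (fun _ j => a j), sum_comm (f := fun _ j => a j)]
  simp only [sum_const, card_univ, nsmul_eq_mul, ← mul_sum]
  ring

theorem sum_offDiag_sum_offDiag_add (v : α → α → R) :
    ∑ q ∈ (univ : Finset α).offDiag, ∑ r ∈ (univ : Finset α).offDiag,
        ((v q.1 r.1 + v q.1 r.2) + (v q.2 r.1 + v q.2 r.2))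
      = 4 * (Fintype.card α - 1) ^ 2 * ∑ i, ∑ j, v i j := by
  simp only [sum_add_distrib (s := (univ : Finset α).offDiag) (f := fun r => v _ r.1 + v _ r.2),
    sum_offDiag_add, ← mul_add]
  rw [← mul_sum, sum_offDiag_add (fun i => ∑ j, v i j)]
  ring

theorem sum_offDiag_sum_offDiag_swapIncrement_sq {c : α → α → R} (hrow : ∀ i, ∑ j, c i j = 0)
    (hcol : ∀ j, ∑ i, c i j = 0) :
    ∑ q ∈ (univ : Finset α).offDiag, ∑ r ∈ (univ : Finset α).offDiag,
        swapIncrement c q.1 q.2 r.1 r.2 ^ 2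
      = 4 * Fintype.card α ^ 2 * ∑ i, ∑ j, c i j ^ 2 := by
  have hinner : ∀ i j, ∑ r ∈ (univ : Finset α).offDiag, swapIncrement c i j r.1 r.2 ^ 2
      = ∑ k, ∑ l, swapIncrement c i j k l ^ 2 := fun i j =>
    sum_offDiag_eq_sum_sum_of_diag (f := fun k l => swapIncrement c i j k l ^ 2)
      fun k => by simp [swapIncrement]
  have hcolumn : ∀ m, ∑ i, ∑ j, (c i m - c j m) ^ 2 = 2 * Fintype.card α * ∑ i, c i m ^ 2 := by
    intro m
    rw [sum_comm, sum_sum_sub_sq (fun i => c i m), hcol]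
    ring
  calc _ = ∑ i, ∑ j, ∑ k, ∑ l, swapIncrement c i j k l ^ 2 := by
        rw [sum_offDiag_eq_sum_sum_of_diag
          (f := fun i j => ∑ r ∈ (univ : Finset α).offDiag, swapIncrement c i j r.1 r.2 ^ 2)
          fun i => by simp [swapIncrement]]
        simp only [hinner]
    _ = 2 * Fintype.card α * ∑ m, ∑ i, ∑ j, (c i m - c j m) ^ 2 := by
        simp only [sum_sum_swapIncrement_sq hrow, ← mul_sum]
        rw [sum_congr rfl fun i _ => sum_comm, sum_comm]
    _ = _ := by
        simp only [hcolumn, ← mul_sum]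
        rw [sum_comm]
        ring

theorem card_mul_sum_offDiag_sum_perm_swapIncrementMoment {v c : α → α → R}
    (hrow : ∀ i, ∑ j, c i j = 0) (hcol : ∀ j, ∑ i, c i j = 0) :
    (Fintype.card α * (Fintype.card α - 1) : R) * ∑ q ∈ (univ : Finset α).offDiag,
        ∑ σ : Equiv.Perm α, swapIncrementMoment v c q.1 q.2 (σ q.1) (σ q.2)
      = (Fintype.card α).factorial * (4 * (Fintype.card α - 1) ^ 2 * ∑ i, ∑ j, v i j
          + 4 * Fintype.card α ^ 2 * ∑ i, ∑ j, c i j ^ 2) := by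
  have hperm : ∀ q ∈ (univ : Finset α).offDiag,
      (Fintype.card α * (Fintype.card α - 1) : R)
          * ∑ σ : Equiv.Perm α, swapIncrementMoment v c q.1 q.2 (σ q.1) (σ q.2)
        = (Fintype.card α).factorial
          * ∑ r ∈ (univ : Finset α).offDiag, swapIncrementMoment v c q.1 q.2 r.1 r.2 := by
    intro q hq
    have h := offDiag_card_nsmul_sum_perm (swapIncrementMoment v c q.1 q.2) (mem_offDiag.1 hq).2.2
    rw [offDiag_card, nsmul_eq_mul, nsmul_eq_mul, card_univ,
      Nat.cast_sub (Nat.le_mul_self _)] at h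
    rw [← h]
    push_cast
    ring
  rw [mul_sum, sum_congr rfl hperm, ← mul_sum]
  simp only [swapIncrementMoment]
  rw [sum_congr rfl fun q _ => sum_add_distrib, sum_add_distrib, sum_offDiag_sum_offDiag_add,
    sum_offDiag_sum_offDiag_swapIncrement_sq hrow hcol]

end Combinatorics

theorem swapIncrement_eq_sum {ι R : Type*} [DecidableEq ι] [CommRing R] (x : ι → ι → R)
    {i j k l : ι} (hij : i ≠ j) (hkl : k ≠ l) :
    swapIncrement x i j k l = ∑ r ∈ ({i, j} : Finset ι) ×ˢ {k, l},
      (if r = (i, k) ∨ r = (j, l) then -1 else 1) * x r.1 r.2 := by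
  simp only [swapIncrement, ite_mul, neg_mul, one_mul, sum_product, Prod.mk.injEq, sum_pair hkl,
    and_true, hkl, and_false, or_false, hkl.symm, false_or, sum_pair hij, ↓reduceIte, hij, hij.symm]
  ring

section Probability

variable {Ω β γ δ : Type*} {mΩ : MeasurableSpace Ω} {μ : Measure Ω}
  [MeasurableSpace β] [MeasurableSpace γ] [MeasurableSpace δ]

theorem ProbabilityTheory.IndepFun.integral_indicator_preimage {f : Ω → β} {Z : Ω → γ}
    (hfZ : IndepFun f Z μ) (hf : Measurable f) (hZ : AEMeasurable Z μ) {s : Set β}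
    (hs : MeasurableSet s) {ψ : γ → ℝ} (hψ : Measurable ψ) :
    ∫ ω, (f ⁻¹' s).indicator (fun ω => ψ (Z ω)) ω ∂μ = μ.real (f ⁻¹' s) * ∫ ω, ψ (Z ω) ∂μ := by
  have hprod : (f ⁻¹' s).indicator (fun ω => ψ (Z ω)) = (s.indicator 1 ∘ f) * (ψ ∘ Z) := by
    ext ω
    by_cases h : f ω ∈ s <;> simp [h]
  rw [hprod, hfZ.integral_comp_mul_comp hf.aemeasurable hZ
    (measurable_one.indicator hs).aestronglyMeasurable hψ.aestronglyMeasurable]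
  exact congrArg (· * _) (integral_indicator_one (hf hs))

theorem integral_comp_eq_sum_of_indepFun [Fintype β] [Fintype γ] [MeasurableSingletonClass β]
    [MeasurableSingletonClass γ] {f : Ω → β} {g : Ω → γ} {Z : Ω → δ} (hf : Measurable f)
    (hg : Measurable g) (hZ : AEMeasurable Z μ) (hf_indep : IndepFun f (fun ω => (Z ω, g ω)) μ)
    (hg_indep : IndepFun g Z μ) {ψ : β → γ → δ → ℝ} (hψ : ∀ b c, Measurable (ψ b c))
    (hint : ∀ b c, Integrable (fun ω => ψ b c (Z ω)) μ) :
    ∫ ω, ψ (f ω) (g ω) (Z ω) ∂μ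
      = ∑ b, ∑ c, μ.real (f ⁻¹' {b}) * (μ.real (g ⁻¹' {c}) * ∫ ω, ψ b c (Z ω) ∂μ) := by
  classical
  have hpt : (fun ω => ψ (f ω) (g ω) (Z ω)) = fun ω => ∑ b, ∑ c, (f ⁻¹' {b}).indicator
      (fun ω => (g ⁻¹' {c}).indicator (fun ω => ψ b c (Z ω)) ω) ω := by
    ext ω
    simp [Set.indicator_apply]
  have hterm : ∀ b c, ∫ ω, (f ⁻¹' {b}).indicator
      (fun ω => (g ⁻¹' {c}).indicator (fun ω => ψ b c (Z ω)) ω) ω ∂μ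
        = μ.real (f ⁻¹' {b}) * (μ.real (g ⁻¹' {c}) * ∫ ω, ψ b c (Z ω) ∂μ) := by
    intro b c
    rw [← hg_indep.integral_indicator_preimage hg hZ (measurableSet_singleton c) (hψ b c)]
    exact hf_indep.integral_indicator_preimage hf (hZ.prodMk hg.aemeasurable)
      (measurableSet_singleton b) (ψ := (Prod.snd ⁻¹' {c}).indicator fun z => ψ b c z.1)
      (((hψ b c).comp measurable_fst).indicator (measurable_snd (measurableSet_singleton c)))
  have hint' : ∀ b c, Integrable ((f ⁻¹' {b}).indicator
      fun ω => (g ⁻¹' {c}).indicator (fun ω => ψ b c (Z ω)) ω) μ := fun b c =>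
    ((hint b c).indicator (hg (measurableSet_singleton c))).indicator
      (hf (measurableSet_singleton b))
  rw [hpt, integral_finsetSum _ fun b _ => integrable_finsetSum _ fun c _ => hint' b c]
  exact sum_congr rfl fun b _ => (integral_finsetSum _ fun c _ => hint' b c).trans
    (sum_congr rfl fun c _ => hterm b c)

theorem integral_sq_sum_of_pairwise_indepFun [IsProbabilityMeasure μ] {ι : Type*}
    {Y : ι → Ω → ℝ} {s : Finset ι} (hY : ∀ i ∈ s, MemLp (Y i) 2 μ)
    (hindep : Set.Pairwise ↑s fun i j => IndepFun (Y i) (Y j) μ) (a : ι → ℝ) :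
    ∫ ω, (∑ i ∈ s, a i * Y i ω) ^ 2 ∂μ
      = ∑ i ∈ s, a i ^ 2 * variance (Y i) μ + (∑ i ∈ s, a i * ∫ ω, Y i ω ∂μ) ^ 2 := by
  have haY : ∀ i ∈ s, MemLp (fun ω => a i * Y i ω) 2 μ := fun i hi => (hY i hi).const_mul (a i)
  have hvariance := IndepFun.variance_sum haY fun i hi j hj hij =>
    (hindep hi hj hij).comp (measurable_const_mul (a i)) (measurable_const_mul (a j))
  have hmean : ∫ ω, ∑ i ∈ s, a i * Y i ω ∂μ = ∑ i ∈ s, a i * ∫ ω, Y i ω ∂μ := by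
    rw [integral_finsetSum _ fun i hi => (haY i hi).integrable one_le_two]
    simp only [integral_const_mul]
  rw [variance_eq_sub (memLp_finsetSum' s haY)] at hvariance
  simp only [variance_const_mul, Finset.sum_apply, Pi.pow_apply] at hvariance
  rw [← hmean]
  linarith

theorem integral_swapIncrement_sq [IsProbabilityMeasure μ] {ι : Type*} [DecidableEq ι]
    {X : ι → ι → Ω → ℝ} (hmom : ∀ i j, MemLp (X i j) 2 μ)
    (hindep : iIndepFun (fun r : ι × ι => X r.1 r.2) μ) {i j k l : ι} (hij : i ≠ j)
    (hkl : k ≠ l) :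
    ∫ ω, swapIncrement (fun a b => X a b ω) i j k l ^ 2 ∂μ
      = swapIncrementMoment (fun a b => variance (X a b) μ) (fun a b => ∫ ω, X a b ω ∂μ)
          i j k l := by
  simp only [swapIncrementMoment, swapIncrement_eq_sum _ hij hkl]
  rw [integral_sq_sum_of_pairwise_indepFun (Y := fun r : ι × ι => X r.1 r.2)
    (fun r _ => hmom r.1 r.2) (fun r _ r' _ hrr' => hindep.indepFun hrr')]
  have hsign : ∀ r : ι × ι, (if r = (i, k) ∨ r = (j, l) then (-1 : ℝ) else 1) ^ 2 = 1 := by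
    intro r
    split_ifs <;> norm_num
  simp only [hsign, one_mul, sum_product, sum_pair hij, sum_pair hkl]

end Probability

instance (n : ℕ) : DiscreteMeasurableSpace (Equiv.Perm (Fin n)) := ⟨fun _ => trivial⟩

theorem permSum'_sub_permSum {Ω : Type*} (n : ℕ) (X : Fin n → Fin n → Ω → ℝ)
    (π : Ω → Equiv.Perm (Fin n)) (p : Ω → Fin n × Fin n) (ω : Ω) :
    permSum' n X π p ω - permSum n X π ω
      = swapIncrement (fun a b => X a b ω) (p ω).1 (p ω).2 (π ω (p ω).1) (π ω (p ω).2) := by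
  simp only [permSum', swapIncrement]
  ring

section CombinatorialSum

variable {Ω : Type*} [MeasureSpace Ω] [IsProbabilityMeasure (ℙ : Measure Ω)]
  {n : ℕ} {X : Fin n → Fin n → Ω → ℝ} {c σ2 : Fin n → Fin n → ℝ}
  {π : Ω → Equiv.Perm (Fin n)} {p : Ω → Fin n × Fin n}

theorem integral_sq_permSum'_sub_permSum_eq_sum (hn : 2 ≤ n)
    (hmom : ∀ i j, MemLp (X i j) 2 ℙ)
    (hindep : iIndepFun (fun q : Fin n × Fin n => X q.1 q.2) ℙ)
    (hmean : ∀ i j, ∫ ω, X i j ω ∂ℙ = c i j)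
    (hvar : ∀ i j, variance (X i j) ℙ = σ2 i j)
    (hπmeas : Measurable π)
    (hπunif : ∀ σ : Equiv.Perm (Fin n), ℙ {ω | π ω = σ} = 1 / (n.factorial : ℝ≥0∞))
    (hπindep : IndepFun π (fun ω (q : Fin n × Fin n) => X q.1 q.2 ω) ℙ)
    (hpmeas : Measurable p)
    (hpunif : ∀ i j : Fin n, i ≠ j →
      ℙ {ω | p ω = (i, j)} = 1 / ((n * (n - 1) : ℕ) : ℝ≥0∞))
    (hpindep : IndepFun p
      (fun ω => ((fun q : Fin n × Fin n => X q.1 q.2 ω), π ω)) ℙ) :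
    ∫ ω, (permSum' n X π p ω - permSum n X π ω) ^ 2 ∂ℙ
      = (∑ q ∈ (univ : Finset (Fin n)).offDiag, ∑ σ : Equiv.Perm (Fin n),
          swapIncrementMoment σ2 c q.1 q.2 (σ q.1) (σ q.2)) / (n * (n - 1) * n.factorial) := by
  have hZ : AEMeasurable (fun ω (q : Fin n × Fin n) => X q.1 q.2 ω) ℙ :=
    aemeasurable_pi_lambda _ fun q => (hmom q.1 q.2).aestronglyMeasurable.aemeasurable
  have hint : ∀ i j k l,
      Integrable (fun ω => swapIncrement (fun a b => X a b ω) i j k l ^ 2) ℙ :=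
    fun i j k l => ((((hmom i l).add (hmom j k)).sub (hmom i k)).sub (hmom j l)).integrable_sq
  have hp_real : ∀ q ∈ (univ : Finset (Fin n)).offDiag,
      (ℙ : Measure Ω).real (p ⁻¹' {q}) = 1 / ((n : ℝ) * (n - 1)) := fun q hq => by
    rw [Measure.real, show p ⁻¹' {q} = {ω | p ω = (q.1, q.2)} from rfl,
      hpunif q.1 q.2 (mem_offDiag.1 hq).2.2, ENNReal.toReal_div, ENNReal.toReal_one,
      ENNReal.toReal_natCast]
    push_cast [Nat.cast_sub (by omega : 1 ≤ n)]
    rfl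
  have hπ_real : ∀ σ, (ℙ : Measure Ω).real (π ⁻¹' {σ}) = 1 / (n.factorial : ℝ) := fun σ => by
    rw [Measure.real, show π ⁻¹' {σ} = {ω | π ω = σ} from rfl, hπunif σ, ENNReal.toReal_div,
      ENNReal.toReal_one, ENNReal.toReal_natCast]
  rw [integral_congr_ae (ae_of_all _ fun ω => congrArg (· ^ 2) (permSum'_sub_permSum n X π p ω)),
    integral_comp_eq_sum_of_indepFun hpmeas hπmeas hZ hpindep hπindep
      (ψ := fun q σ x => swapIncrement (fun a b => x (a, b)) q.1 q.2 (σ q.1) (σ q.2) ^ 2)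
      (fun q σ => by simp only [swapIncrement]; fun_prop) (fun q σ => hint _ _ _ _)]
  dsimp only
  rw [← sum_subset (subset_univ (univ : Finset (Fin n)).offDiag) fun q _ hq => by
    have hdiag : q.1 = q.2 := by simpa using hq
    simp [hdiag, swapIncrement], sum_div]
  refine sum_congr rfl fun q hq => ?_
  have hq' := (mem_offDiag.1 hq).2.2
  have hmoment : ∀ σ : Equiv.Perm (Fin n),
      ∫ ω, swapIncrement (fun a b => X a b ω) q.1 q.2 (σ q.1) (σ q.2) ^ 2 ∂ℙ
        = swapIncrementMoment σ2 c q.1 q.2 (σ q.1) (σ q.2) := fun σ => by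
    rw [integral_swapIncrement_sq hmom hindep hq' (σ.injective.ne hq')]
    simp only [hvar, hmean]
  simp only [hp_real q hq, hπ_real, hmoment, ← mul_sum]
  rw [← mul_assoc, one_div_mul_one_div, one_div_mul_eq_div]

theorem integral_sq_permSum'_sub_permSum (hn : 2 ≤ n)
    (hmom : ∀ i j, MemLp (X i j) 2 ℙ)
    (hindep : iIndepFun (fun q : Fin n × Fin n => X q.1 q.2) ℙ)
    (hmean : ∀ i j, ∫ ω, X i j ω ∂ℙ = c i j)
    (hvar : ∀ i j, variance (X i j) ℙ = σ2 i j)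
    (hrow : ∀ i, ∑ j, c i j = 0)
    (hcol : ∀ j, ∑ i, c i j = 0)
    (hπmeas : Measurable π)
    (hπunif : ∀ σ : Equiv.Perm (Fin n), ℙ {ω | π ω = σ} = 1 / (n.factorial : ℝ≥0∞))
    (hπindep : IndepFun π (fun ω (q : Fin n × Fin n) => X q.1 q.2 ω) ℙ)
    (hpmeas : Measurable p)
    (hpunif : ∀ i j : Fin n, i ≠ j →
      ℙ {ω | p ω = (i, j)} = 1 / ((n * (n - 1) : ℕ) : ℝ≥0∞))
    (hpindep : IndepFun p
      (fun ω => ((fun q : Fin n × Fin n => X q.1 q.2 ω), π ω)) ℙ) :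
    ∫ ω, (permSum' n X π p ω - permSum n X π ω) ^ 2 ∂ℙ
      = 4 / (n : ℝ) ^ 2 * ∑ i, ∑ j, σ2 i j + 4 / ((n : ℝ) - 1) ^ 2 * ∑ i, ∑ j, c i j ^ 2 := by
  have hcount := card_mul_sum_offDiag_sum_perm_swapIncrementMoment (R := ℝ) (v := σ2) hrow hcol
  rw [Fintype.card_fin] at hcount
  have hn1 : (0 : ℝ) < n - 1 := by
    have : (2 : ℝ) ≤ n := by exact_mod_cast hn
    linarith
  rw [integral_sq_permSum'_sub_permSum_eq_sum hn hmom hindep hmean hvar hπmeas hπunif hπindep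
    hpmeas hpunif hpindep, div_eq_iff (by positivity)]
  field_simp
  linear_combination hcount

end CombinatorialSum

theorem four_div_le_and_le_four_div_sub_one {n S D : ℝ} (hn : 1 < n) (hS : 0 ≤ S) (hD : 0 ≤ D)
    (h : 1 / n * S + 1 / (n - 1) * D = 1) :
    4 / n ≤ 4 / n ^ 2 * S + 4 / (n - 1) ^ 2 * D
      ∧ 4 / n ^ 2 * S + 4 / (n - 1) ^ 2 * D ≤ 4 / (n - 1) := by
  have hn1 : 0 < n - 1 := by linarith
  have hE : 4 / n ^ 2 * S + 4 / (n - 1) ^ 2 * D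
      = 4 / n * (1 / n * S) + 4 / (n - 1) * (1 / (n - 1) * D) := by
    field_simp
  have ha : 0 ≤ 1 / n * S := by positivity
  have hb : 0 ≤ 1 / (n - 1) * D := mul_nonneg (one_div_nonneg.2 hn1.le) hD
  have hlt : 4 / n ≤ 4 / (n - 1) := div_le_div_of_nonneg_left (by norm_num) hn1 (by linarith)
  rw [hE]
  generalize 1 / n * S = a at h ha
  generalize 1 / (n - 1) * D = b at h hb
  constructor
  · calc 4 / n = 4 / n * a + 4 / n * b := by rw [← mul_add, h, mul_one]
      _ ≤ _ := by gcongr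
  · calc _ ≤ 4 / (n - 1) * a + 4 / (n - 1) * b := by gcongr
      _ = 4 / (n - 1) := by rw [← mul_add, h, mul_one]

theorem four_div_sub_one_mul_one_sub_inv_sqrt_le {n : ℝ} (hn : 1 < n) :
    4 / (n - 1) * (1 - 1 / Real.sqrt n) ≤ 4 / n := by
  have hs := Real.sq_sqrt (by linarith : 0 ≤ n)
  have hs1 : 1 < Real.sqrt n := Real.lt_sqrt_of_sq_lt (by linarith)
  rw [div_mul_eq_mul_div, div_le_div_iff₀ (by linarith) (by linarith)]
  rw [one_sub_div (by positivity), mul_div_assoc', div_mul_eq_mul_div, div_le_iff₀ (by positivity)]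
  nlinarith

theorem combinatorial_sum_increment_second_moment_general
    {Ω : Type*} [MeasureSpace Ω] [IsProbabilityMeasure (ℙ : Measure Ω)]
    (n : ℕ) (hn : 2 ≤ n)
    (X : Fin n → Fin n → Ω → ℝ) (c σ2 : Fin n → Fin n → ℝ)
    (hmom : ∀ i j, MemLp (X i j) 2 ℙ)
    (hindep : iIndepFun (fun q : Fin n × Fin n => X q.1 q.2) ℙ)
    (hmean : ∀ i j, ∫ ω, X i j ω ∂ℙ = c i j)
    (hvar : ∀ i j, variance (X i j) ℙ = σ2 i j)
    (hrow : ∀ i, ∑ j, c i j = 0)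
    (hcol : ∀ j, ∑ i, c i j = 0)
    (hnorm : (1 / (n : ℝ)) * ∑ i, ∑ j, σ2 i j
        + (1 / ((n : ℝ) - 1)) * ∑ i, ∑ j, c i j ^ 2 = 1)
    (π : Ω → Equiv.Perm (Fin n)) (hπmeas : Measurable π)
    (hπunif : ∀ σ : Equiv.Perm (Fin n), ℙ {ω | π ω = σ} = 1 / (n.factorial : ℝ≥0∞))
    (hπindep : IndepFun π (fun ω (q : Fin n × Fin n) => X q.1 q.2 ω) ℙ)
    (p : Ω → Fin n × Fin n) (hpmeas : Measurable p)
    (hpunif : ∀ i j : Fin n, i ≠ j →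
      ℙ {ω | p ω = (i, j)} = 1 / ((n * (n - 1) : ℕ) : ℝ≥0∞))
    (hpindep : IndepFun p
      (fun ω => ((fun q : Fin n × Fin n => X q.1 q.2 ω), π ω)) ℙ) :
    (4 / ((n : ℝ) - 1)) * (1 - 1 / Real.sqrt n)
        ≤ ∫ ω, (permSum' n X π p ω - permSum n X π ω) ^ 2 ∂ℙ
    ∧ ∫ ω, (permSum' n X π p ω - permSum n X π ω) ^ 2 ∂ℙ
        ≤ (4 / ((n : ℝ) - 1)) * (1 + 1 / Real.sqrt n) := by
  have hn1 : (1 : ℝ) < n := by exact_mod_cast hn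
  have hS : 0 ≤ ∑ i, ∑ j, σ2 i j :=
    sum_nonneg fun i _ => sum_nonneg fun j _ => hvar i j ▸ variance_nonneg _ _
  obtain ⟨hlower, hupper⟩ := four_div_le_and_le_four_div_sub_one hn1 hS (by positivity) hnorm
  rw [integral_sq_permSum'_sub_permSum hn hmom hindep hmean hvar hrow hcol hπmeas hπunif hπindep
    hpmeas hpunif hpindep]
  exact ⟨(four_div_sub_one_mul_one_sub_inv_sqrt_le hn1).trans hlower,
    hupper.trans (le_mul_of_one_le_right (div_nonneg zero_le_four (by linarith))
      (le_add_of_nonneg_right (by positivity)))⟩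

/-- **Second-moment bounds for the increment of the combinatorial exchangeable pair
(equation (3.9)):** `(4/(n-1))(1 - 1/√n) ≤ E(W' - W)² ≤ (4/(n-1))(1 + 1/√n)`. -/
theorem combinatorial_sum_increment_second_moment
    {Ω : Type*} [MeasureSpace Ω] [IsProbabilityMeasure (ℙ : Measure Ω)]
    (n : ℕ) (hn : 2 ≤ n)
    (X : Fin n → Fin n → Ω → ℝ) (c σ2 : Fin n → Fin n → ℝ)
    (hmeas : ∀ i j, Measurable (X i j))
    (hmom : ∀ i j, MemLp (X i j) 2 ℙ)
    (hindep : iIndepFun (fun q : Fin n × Fin n => X q.1 q.2) ℙ)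
    (hmean : ∀ i j, ∫ ω, X i j ω ∂ℙ = c i j)
    (hvar : ∀ i j, variance (X i j) ℙ = σ2 i j)
    (hrow : ∀ i, ∑ j, c i j = 0)
    (hcol : ∀ j, ∑ i, c i j = 0)
    (hnorm : (1 / (n : ℝ)) * ∑ i, ∑ j, σ2 i j
        + (1 / ((n : ℝ) - 1)) * ∑ i, ∑ j, c i j ^ 2 = 1)
    (π : Ω → Equiv.Perm (Fin n)) (hπmeas : Measurable π)
    (hπunif : ∀ σ : Equiv.Perm (Fin n), ℙ {ω | π ω = σ} = 1 / (n.factorial : ℝ≥0∞))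
    (hπindep : IndepFun π (fun ω (q : Fin n × Fin n) => X q.1 q.2 ω) ℙ)
    (p : Ω → Fin n × Fin n) (hpmeas : Measurable p)
    (hpunif : ∀ i j : Fin n, i ≠ j →
      ℙ {ω | p ω = (i, j)} = 1 / ((n * (n - 1) : ℕ) : ℝ≥0∞))
    (hpindep : IndepFun p
      (fun ω => ((fun q : Fin n × Fin n => X q.1 q.2 ω), π ω)) ℙ) :
    (4 / ((n : ℝ) - 1)) * (1 - 1 / Real.sqrt n)
        ≤ ∫ ω, (permSum' n X π p ω - permSum n X π ω) ^ 2 ∂ℙ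
    ∧ ∫ ω, (permSum' n X π p ω - permSum n X π ω) ^ 2 ∂ℙ
        ≤ (4 / ((n : ℝ) - 1)) * (1 + 1 / Real.sqrt n) :=
  combinatorial_sum_increment_second_moment_general n hn X c σ2 hmom hindep hmean hvar hrow hcol
    hnorm π hπmeas hπunif hπindep p hpmeas hpunif hpindep
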